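/- arXiv:1607.02081 — 3 statements merged into one kernel-verified Lean document; each statement's English description precedes it below -/
import Mathlib

section
/- Let N ≥ 3 be an integer, let (p,q) be a pair of primes compatible with N, and let n be an integer with 1 ≤ n ≤ N. Suppose that min{f_x(t) : x ∈ S_n} = min{f_x(t) : x ∈ V_n} for all t > 0. If X ⊆ V_n is such that min{f_x(t) : x ∈ X} = min{f_x(t) : x ∈ V_n} for all t > 0, then S_n ⊆ X. -/
open Real

/-- The golden ratio `(1 + √5)/2`. -/
noncomputable def phiR : ℝ := (1 + Real.sqrt 5) / 2

/-- `mmax p q n = max(h_n·log p, h_{n-1}·log q)`, the logarithmic Mahler measure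
of `p^{h_n}/q^{h_{n-1}}` for distinct primes `p`, `q`, where `h` is Fibonacci. -/
noncomputable def mmax (p q n : ℕ) : ℝ :=
  max ((Nat.fib n : ℝ) * Real.log p) ((Nat.fib (n - 1) : ℝ) * Real.log q)

/-- `gmax n = max(h_n, φ·h_{n-1})`. -/
noncomputable def gmax (n : ℕ) : ℝ :=
  max (Nat.fib n : ℝ) (phiR * (Nat.fib (n - 1) : ℝ))

/-- The equation defining `t_n(p,q)`:
`m(p^{h_n}/q^{h_{n-1}})^t = m(p^{h_{n-1}}/q^{h_{n-2}})^t + m(p^{h_{n-2}}/q^{h_{n-3}})^t`. -/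
def peq (p q n : ℕ) (t : ℝ) : Prop :=
  mmax p q n ^ t = mmax p q (n - 1) ^ t + mmax p q (n - 2) ^ t

/-- The equation defining `s_n`:
`max(h_n, φ h_{n-1})^t = max(h_{n-1}, φ h_{n-2})^t + max(h_{n-2}, φ h_{n-3})^t`. -/
def geq (n : ℕ) (t : ℝ) : Prop :=
  gmax n ^ t = gmax (n - 1) ^ t + gmax (n - 2) ^ t

/-- Condition (W) on a pair of primes `(p,q)` relative to `N`. -/
def CondW (N p q : ℕ) : Prop :=
  ((Nat.fib N : ℝ) / Nat.fib (N - 1) < Real.log q / Real.log p ∧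
    Real.log q / Real.log p < (Nat.fib (N - 1) : ℝ) / Nat.fib (N - 2)) ∨
  ((Nat.fib (N - 1) : ℝ) / Nat.fib (N - 2) < Real.log q / Real.log p ∧
    Real.log q / Real.log p < (Nat.fib N : ℝ) / Nat.fib (N - 1))

/-- `V_n`: vectors `x ∈ ℕ^N` (1-based entry `i` is `x ⟨i-1⟩`) with
`Σ x_i h_i = h_n` and `Σ x_i h_{i-1} = h_{n-1}`. -/
def Vset (N n : ℕ) : Set (Fin N → ℕ) :=
  {x | ∑ i, x i * Nat.fib ((i : ℕ) + 1) = Nat.fib n ∧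
       ∑ i, x i * Nat.fib (i : ℕ) = Nat.fib (n - 1)}

/-- The measure function `f_x(t) = (Σ_{i=1}^N x_i·max(h_i log p, h_{i-1} log q)^t)^{1/t}`. -/
noncomputable def fmeas (N p q : ℕ) (x : Fin N → ℕ) (t : ℝ) : ℝ :=
  (∑ i, (x i : ℝ) * mmax p q ((i : ℕ) + 1) ^ t) ^ (1 / t)

/-- `x_n(i)`: the vector whose (i−2)nd (1-based) entry is `h_{n+1−i}`, whose
(i−1)st entry is `h_{n+2−i}`, and whose other entries are 0.  (For `i = 2`, `n = 1`
this gives `x_1(2) = (1,0,…,0)`.) -/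
def xvec (N n i : ℕ) : Fin N → ℕ := fun j =>
  if (j : ℕ) + 3 = i then Nat.fib (n + 1 - i)
  else if (j : ℕ) + 2 = i then Nat.fib (n + 2 - i)
  else 0

/-- `S_n = {x_n(i) : 3 ≤ i ≤ n+1}` for `n ≥ 2`, and `S_1 = {x_1(2)}`. -/
def Sset (N n : ℕ) : Set (Fin N → ℕ) :=
  if n = 1 then {xvec N 1 2}
  else {x | ∃ i, 3 ≤ i ∧ i ≤ n + 1 ∧ x = xvec N n i}

/-- `z` is almost consecutive-free: `z_j·z_{j+1} ≠ 0` implies `z_i = 0` for all `i > j+1`. -/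
def ACF (N : ℕ) (z : Fin N → ℕ) : Prop :=
  ∀ (j : Fin N) (hj : (j : ℕ) + 1 < N),
    z j * z ⟨(j : ℕ) + 1, hj⟩ ≠ 0 → ∀ i : Fin N, (j : ℕ) + 1 < (i : ℕ) → z i = 0

/-- `C_n`: the almost consecutive-free elements of `V_n`. -/
def Cset (N n : ℕ) : Set (Fin N → ℕ) := {z ∈ Vset N n | ACF N z}

/-- A factorization of `z ∈ V_n`: a `K`-tuple `x` with `x k ∈ V_{idx k}`,
`1 ≤ idx k ≤ n`, and `z = Σ_k x k`. -/
def IsFactorization (N n : ℕ) (z : Fin N → ℕ) {K : ℕ}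
    (idx : Fin K → ℕ) (x : Fin K → Fin N → ℕ) : Prop :=
  (∀ k, 1 ≤ idx k ∧ idx k ≤ n ∧ x k ∈ Vset N (idx k)) ∧ z = ∑ k, x k

/-- A tuple is `S`-type if each component lies in `∪_{i=1}^n S_i`. -/
def STypeFac (N n : ℕ) {K : ℕ} (x : Fin K → Fin N → ℕ) : Prop :=
  ∀ k, ∃ i, 1 ≤ i ∧ i ≤ n ∧ x k ∈ Sset N i

/-- `z` is `S`-restricted: every non-trivial (i.e. `K ≠ 1`) factorization is `S`-type. -/
def SRestricted (N n : ℕ) (z : Fin N → ℕ) : Prop :=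
  ∀ (K : ℕ) (idx : Fin K → ℕ) (x : Fin K → Fin N → ℕ),
    IsFactorization N n z idx x → K ≠ 1 → STypeFac N n x

/-- `R_n`: the `S`-restricted elements of `C_n`. -/
def Rset (N n : ℕ) : Set (Fin N → ℕ) := {z ∈ Cset N n | SRestricted N n z}

/-- The infimum attaining set `U_x = {t > 0 : f_x(t) = min{f_y(t) : y ∈ V_j}}`. -/
def Uset (N p q j : ℕ) (x : Fin N → ℕ) : Set ℝ :=
  {t | 0 < t ∧ IsLeast ((fun y => fmeas N p q y t) '' Vset N j) (fmeas N p q x t)}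

/-- The shift map `λ((x_1,…,x_N)) = (0,x_1,…,x_{N-1})`. -/
def shiftMap (N : ℕ) (x : Fin N → ℕ) : Fin N → ℕ := fun j =>
  if (j : ℕ) = 0 then 0
  else x ⟨(j : ℕ) - 1, lt_of_le_of_lt (Nat.sub_le _ _) j.isLt⟩

lemma st16_rpow_exp {a : ℝ} (ha : 0 < a) (t : ℝ) : a ^ t = Real.exp (Real.log a * t) :=
  Real.rpow_def_of_pos ha t

lemma st16_cont {a : ℝ} (ha : 0 < a) : Continuous (fun t : ℝ => a ^ t) := by
  have h : (fun t : ℝ => a ^ t) = fun t => Real.exp (Real.log a * t) :=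
    funext (st16_rpow_exp ha)
  rw [h]
  exact Real.continuous_exp.comp (continuous_const.mul continuous_id)

lemma st16_logs (N p q : ℕ) (hN : 3 ≤ N) (hp : p.Prime) (hq : q.Prime) (hW : CondW N p q) :
    0 < Real.log p ∧ Real.log p < Real.log q ∧ Real.log q < 2 * Real.log p := by
  obtain ⟨M, rfl⟩ : ∃ M, N = M + 3 := ⟨N - 3, by omega⟩
  have hL : 0 < Real.log p := Real.log_pos (by exact_mod_cast hp.one_lt)
  have f1 : (0:ℝ) < Nat.fib (M+1) := by exact_mod_cast Nat.fib_pos.mpr (by omega)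
  have f2 : (0:ℝ) < Nat.fib (M+2) := by exact_mod_cast Nat.fib_pos.mpr (by omega)
  have e1 : M + 3 - 1 = M + 2 := by omega
  have e2 : M + 3 - 2 = M + 1 := by omega
  unfold CondW at hW
  rw [e1, e2] at hW
  have key3 : Nat.fib (M+3) = Nat.fib (M+1) + Nat.fib (M+2) := by
    have h := Nat.fib_add_two (n := M+1)
    simpa [show M+1+2 = M+3 by omega, show M+1+1 = M+2 by omega] using h
  have key2 : Nat.fib (M+2) = Nat.fib M + Nat.fib (M+1) := by
    have h := Nat.fib_add_two (n := M)
    simpa [show M+1+1 = M+2 by omega] using h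
  have m1 : Nat.fib M ≤ Nat.fib (M+1) := Nat.fib_mono (by omega)
  have m2 : Nat.fib (M+1) ≤ Nat.fib (M+2) := Nat.fib_mono (by omega)
  have hub1 : (Nat.fib (M+3) : ℝ) / Nat.fib (M+2) ≤ 2 := by
    rw [div_le_iff₀ f2]
    have : Nat.fib (M+3) ≤ 2 * Nat.fib (M+2) := by omega
    exact_mod_cast this
  have hub2 : (Nat.fib (M+2) : ℝ) / Nat.fib (M+1) ≤ 2 := by
    rw [div_le_iff₀ f1]
    have : Nat.fib (M+2) ≤ 2 * Nat.fib (M+1) := by omega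
    exact_mod_cast this
  have hlb1 : (1:ℝ) ≤ (Nat.fib (M+3) : ℝ) / Nat.fib (M+2) := by
    rw [le_div_iff₀ f2, one_mul]
    have : Nat.fib (M+2) ≤ Nat.fib (M+3) := by omega
    exact_mod_cast this
  have hlb2 : (1:ℝ) ≤ (Nat.fib (M+2) : ℝ) / Nat.fib (M+1) := by
    rw [le_div_iff₀ f1, one_mul]
    have : Nat.fib (M+1) ≤ Nat.fib (M+2) := by omega
    exact_mod_cast this
  have hr1 : 1 < Real.log q / Real.log p := by
    rcases hW with ⟨h1, _⟩ | ⟨h1, _⟩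
    · exact lt_of_le_of_lt hlb1 h1
    · exact lt_of_le_of_lt hlb2 h1
  have hr2 : Real.log q / Real.log p < 2 := by
    rcases hW with ⟨_, h2⟩ | ⟨_, h2⟩
    · exact lt_of_lt_of_le h2 hub2
    · exact lt_of_lt_of_le h2 hub1
  refine ⟨hL, ?_, ?_⟩
  · have := (one_lt_div hL).mp hr1
    linarith
  · have := (div_lt_iff₀ hL).mp hr2
    linarith

lemma st16_mmax_pos (p q : ℕ) (hL : 0 < Real.log p) {m : ℕ} (hm : 1 ≤ m) :
    0 < mmax p q m := by
  have : (0:ℝ) < (Nat.fib m : ℝ) * Real.log p := by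
    have : (0:ℝ) < Nat.fib m := by exact_mod_cast Nat.fib_pos.mpr hm
    positivity
  exact lt_of_lt_of_le this (le_max_left _ _)

lemma st16_mmax_lt (p q : ℕ) (hL : 0 < Real.log p) (hLQ : Real.log p < Real.log q)
    (hQ2 : Real.log q < 2 * Real.log p) {m : ℕ} (hm : 1 ≤ m) :
    mmax p q m < mmax p q (m+1) := by
  have hQ : 0 < Real.log q := hL.trans hLQ
  match m, hm with
  | 1, _ =>
    unfold mmax
    norm_num [Nat.fib_one, Nat.fib_two, Nat.fib_zero]
    exact ⟨hLQ, hQ⟩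
  | 2, _ =>
    unfold mmax
    norm_num [Nat.fib_one, Nat.fib_two]
    exact ⟨by linarith, hQ2⟩
  | (k+3), _ =>
    rw [show k+3+1 = k+4 by omega]
    unfold mmax
    rw [show k + 3 - 1 = k + 2 by omega, show k + 4 - 1 = k + 3 by omega]
    have h4 : Nat.fib (k+4) = Nat.fib (k+2) + Nat.fib (k+3) := by
      have h := Nat.fib_add_two (n := k+2)
      simpa [show k+2+2 = k+4 by omega, show k+2+1 = k+3 by omega] using h
    have h3 : Nat.fib (k+3) = Nat.fib (k+1) + Nat.fib (k+2) := by
      have h := Nat.fib_add_two (n := k+1)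
      simpa [show k+1+2 = k+3 by omega, show k+1+1 = k+2 by omega] using h
    have p1 : 1 ≤ Nat.fib (k+1) := Nat.fib_pos.mpr (by omega)
    have p2 : 1 ≤ Nat.fib (k+2) := Nat.fib_pos.mpr (by omega)
    have fib1 : Nat.fib (k+3) < Nat.fib (k+4) := by omega
    have fib2 : Nat.fib (k+2) < Nat.fib (k+3) := by omega
    refine max_lt ?_ ?_
    · refine lt_of_lt_of_le ?_ (le_max_left _ _)
      have hc : (Nat.fib (k+3) : ℝ) < Nat.fib (k+4) := by exact_mod_cast fib1
      exact mul_lt_mul_of_pos_right hc hL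
    · refine lt_of_lt_of_le ?_ (le_max_right _ _)
      have hc : (Nat.fib (k+2) : ℝ) < Nat.fib (k+3) := by exact_mod_cast fib2
      exact mul_lt_mul_of_pos_right hc hQ
lemma st16_mmax_mono (p q : ℕ) (hL : 0 < Real.log p) (hLQ : Real.log p < Real.log q)
    (hQ2 : Real.log q < 2 * Real.log p) {m1 m2 : ℕ} (h1 : 1 ≤ m1) (h : m1 < m2) :
    mmax p q m1 < mmax p q m2 := by
  induction m2 with
  | zero => omega
  | succ k ih =>
    rcases Nat.lt_succ_iff_lt_or_eq.mp h with h' | h'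
    · exact (ih h').trans (st16_mmax_lt p q hL hLQ hQ2 (by omega))
    · subst h'; exact st16_mmax_lt p q hL hLQ hQ2 h1

noncomputable def st16_phi (p q m : ℕ) (t : ℝ) : ℝ :=
  mmax p q (m-1) ^ t + mmax p q (m-2) ^ t - mmax p q m ^ t

lemma st16_peq_iff {p q m : ℕ} {t : ℝ} : peq p q m t ↔ st16_phi p q m t = 0 := by
  unfold peq st16_phi
  constructor <;> intro h <;> linarith

lemma st16_phi_zero (p q m : ℕ) : st16_phi p q m 0 = 1 := by
  unfold st16_phi
  rw [Real.rpow_zero, Real.rpow_zero, Real.rpow_zero]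
  norm_num

lemma st16_phi_cont (p q : ℕ) (hL : 0 < Real.log p) {m : ℕ} (hm : 3 ≤ m) :
    Continuous (st16_phi p q m) := by
  unfold st16_phi
  exact ((st16_cont (st16_mmax_pos p q hL (by omega : 1 ≤ m - 1))).add
    (st16_cont (st16_mmax_pos p q hL (by omega : 1 ≤ m - 2)))).sub
    (st16_cont (st16_mmax_pos p q hL (by omega : 1 ≤ m)))

lemma st16_phi_pos (p q : ℕ) (hL : 0 < Real.log p) {m : ℕ} (hm : 3 ≤ m) {tm : ℝ}
    (htm0 : 0 < tm) (huniq : ∀ t', 0 < t' → peq p q m t' → t' = tm)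
    {t : ℝ} (ht : 0 < t) (htlt : t < tm) : 0 < st16_phi p q m t := by
  by_contra hcon
  push_neg at hcon
  rcases eq_or_lt_of_le hcon with heq | hlt
  · have := huniq t ht (st16_peq_iff.mpr heq)
    linarith
  · have hcont := st16_phi_cont p q hL hm
    have hivt := intermediate_value_Icc' (le_of_lt ht) hcont.continuousOn
    have h0mem : (0:ℝ) ∈ Set.Icc (st16_phi p q m t) (st16_phi p q m 0) := by
      rw [st16_phi_zero]
      exact ⟨le_of_lt hlt, by norm_num⟩
    obtain ⟨c, hc, hc0⟩ := hivt h0mem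
    have hcne : c ≠ 0 := by
      intro h
      rw [h, st16_phi_zero] at hc0
      norm_num at hc0
    have hcpos : 0 < c := lt_of_le_of_ne hc.1 (Ne.symm hcne)
    have := huniq c hcpos (st16_peq_iff.mpr hc0)
    have : c < tm := lt_of_le_of_lt hc.2 htlt
    linarith [huniq c hcpos (st16_peq_iff.mpr hc0)]

lemma st16_phi_neg (p q : ℕ) (hL : 0 < Real.log p) (hLQ : Real.log p < Real.log q)
    (hQ2 : Real.log q < 2 * Real.log p) {m : ℕ} (hm : 3 ≤ m) {tm : ℝ}
    (htm0 : 0 < tm) (huniq : ∀ t', 0 < t' → peq p q m t' → t' = tm)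
    {t : ℝ} (htgt : tm < t) : st16_phi p q m t < 0 := by
  have ht : 0 < t := htm0.trans htgt
  by_contra hcon
  push_neg at hcon
  rcases eq_or_lt_of_le hcon with heq | hlt
  · have := huniq t ht (st16_peq_iff.mpr heq.symm)
    linarith
  · -- find T with phi T < 0
    set A := mmax p q m with hA_def
    set B := mmax p q (m-1) with hB_def
    set C := mmax p q (m-2) with hC_def
    have hA : 0 < A := st16_mmax_pos p q hL (by omega)
    have hB : 0 < B := st16_mmax_pos p q hL (by omega)
    have hC : 0 < C := st16_mmax_pos p q hL (by omega)
    have hBA : B < A := st16_mmax_mono p q hL hLQ hQ2 (by omega) (by omega)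
    have hCA : C < A := st16_mmax_mono p q hL hLQ hQ2 (by omega) (by omega)
    have r1 : 0 < B/A := div_pos hB hA
    have r2 : 0 < C/A := div_pos hC hA
    have tend1 := tendsto_rpow_atTop_of_base_lt_one (B/A) (by linarith) ((div_lt_one hA).mpr hBA)
    have tend2 := tendsto_rpow_atTop_of_base_lt_one (C/A) (by linarith) ((div_lt_one hA).mpr hCA)
    have tends := tend1.add tend2
    rw [add_zero] at tends
    have hev : ∀ᶠ T : ℝ in Filter.atTop, (B/A) ^ T + (C/A) ^ T < 1 :=
      tends.eventually_lt_const one_pos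
    obtain ⟨T, hT1, hT2⟩ := (hev.and (Filter.eventually_gt_atTop t)).exists
    have hApow : 0 < A ^ T := Real.rpow_pos_of_pos hA T
    have hphiT : st16_phi p q m T < 0 := by
      have eB : B ^ T = (B/A) ^ T * A ^ T := by
        rw [Real.div_rpow hB.le hA.le]
        field_simp
      have eC : C ^ T = (C/A) ^ T * A ^ T := by
        rw [Real.div_rpow hC.le hA.le]
        field_simp
      unfold st16_phi
      rw [← hA_def, ← hB_def, ← hC_def, eB, eC]
      nlinarith [hT1, hApow]
    have hcont := st16_phi_cont p q hL hm
    have hivt := intermediate_value_Icc' (le_of_lt hT2) hcont.continuousOn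
    have h0mem : (0:ℝ) ∈ Set.Icc (st16_phi p q m T) (st16_phi p q m t) := ⟨hphiT.le, hlt.le⟩
    obtain ⟨c, hc, hc0⟩ := hivt h0mem
    have hcpos : 0 < c := lt_of_lt_of_le ht hc.1
    have hceq := huniq c hcpos (st16_peq_iff.mpr hc0)
    linarith [hc.1]

noncomputable def st16_g (p q n i : ℕ) (t : ℝ) : ℝ :=
  (Nat.fib (n+1-i) : ℝ) * mmax p q (i-2) ^ t + (Nat.fib (n+2-i) : ℝ) * mmax p q (i-1) ^ t

lemma st16_g_step (p q n j : ℕ) (h3 : 3 ≤ j) (hjn : j ≤ n) (t : ℝ) :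
    st16_g p q n (j+1) t - st16_g p q n j t
      = -(Nat.fib (n+1-j) : ℝ) * st16_phi p q j t := by
  obtain ⟨j', rfl⟩ : ∃ j', j = j' + 3 := ⟨j - 3, by omega⟩
  obtain ⟨m', rfl⟩ : ∃ m', n = (j' + 3) + m' := ⟨n - (j' + 3), by omega⟩
  unfold st16_g st16_phi
  rw [show j'+3+m'+1-(j'+3+1) = m' by omega, show j'+3+m'+2-(j'+3+1) = m'+1 by omega,
      show j'+3+1-2 = j'+2 by omega, show j'+3+1-1 = j'+3 by omega,
      show j'+3+m'+1-(j'+3) = m'+1 by omega, show j'+3+m'+2-(j'+3) = m'+2 by omega,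
      show j'+3-2 = j'+1 by omega, show j'+3-1 = j'+2 by omega]
  have hfib : (Nat.fib (m'+2) : ℝ) = Nat.fib m' + Nat.fib (m'+1) := by
    exact_mod_cast congrArg (Nat.cast : ℕ → ℝ) (Nat.fib_add_two (n := m'))
  rw [hfib]
  ring

lemma st16_sum_xvec (p q N n i : ℕ) (h3 : 3 ≤ i) (hi : i ≤ n+1) (hnN : n ≤ N) (t : ℝ) :
    (∑ j : Fin N, (xvec N n i j : ℝ) * mmax p q ((j : ℕ) + 1) ^ t) = st16_g p q n i t := by
  have hN : i - 2 < N := by omega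
  set j1 : Fin N := ⟨i-3, by omega⟩ with hj1
  set j2 : Fin N := ⟨i-2, by omega⟩ with hj2
  have hterm : ∀ j : Fin N, (xvec N n i j : ℝ) * mmax p q ((j : ℕ) + 1) ^ t
      = (if j = j1 then (Nat.fib (n+1-i) : ℝ) * mmax p q (i-2) ^ t else 0)
      + (if j = j2 then (Nat.fib (n+2-i) : ℝ) * mmax p q (i-1) ^ t else 0) := by
    intro j
    unfold xvec
    by_cases h1 : (j : ℕ) + 3 = i
    · have hjj1 : j = j1 := by
        apply Fin.ext
        simp [hj1]
        omega
      have hjj2 : j ≠ j2 := by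
        intro h
        rw [h] at h1
        simp [hj2] at h1
        omega
      rw [if_pos h1, if_pos hjj1, if_neg hjj2]
      have : (j : ℕ) + 1 = i - 2 := by omega
      rw [this]
      ring
    · by_cases h2 : (j : ℕ) + 2 = i
      · have hjj2 : j = j2 := by
          apply Fin.ext
          simp [hj2]
          omega
        have hjj1 : j ≠ j1 := by
          intro h
          rw [h] at h2
          simp [hj1] at h2
          omega
        rw [if_neg h1, if_pos h2, if_pos hjj2, if_neg hjj1]
        have : (j : ℕ) + 1 = i - 1 := by omega
        rw [this]
        ring
      · have hjj1 : j ≠ j1 := by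
          intro h
          rw [h] at h1
          simp [hj1] at h1
          omega
        have hjj2 : j ≠ j2 := by
          intro h
          rw [h] at h2
          simp [hj2] at h2
          omega
        rw [if_neg h1, if_neg h2, if_neg hjj1, if_neg hjj2]
        norm_num
  rw [Finset.sum_congr rfl (fun j _ => hterm j), Finset.sum_add_distrib,
      Finset.sum_ite_eq' Finset.univ j1, Finset.sum_ite_eq' Finset.univ j2]
  simp [st16_g]

lemma st16_mmax_nonneg (p q : ℕ) (hL : 0 < Real.log p) (m : ℕ) : 0 ≤ mmax p q m := by
  refine le_trans ?_ (le_max_left _ _)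
  positivity

lemma st16_g_nonneg (p q n i : ℕ) (hL : 0 < Real.log p) (t : ℝ) : 0 ≤ st16_g p q n i t := by
  unfold st16_g
  have h1 := st16_mmax_nonneg p q hL (i-2)
  have h2 := st16_mmax_nonneg p q hL (i-1)
  positivity

lemma st16_Vfin (N n : ℕ) : (Vset N n).Finite := by
  apply Set.Finite.subset (Set.finite_Icc (fun _ : Fin N => 0) (fun _ : Fin N => Nat.fib n))
  intro x hx
  rw [Set.mem_Icc]
  refine ⟨fun j => Nat.zero_le _, fun j => ?_⟩
  calc x j ≤ x j * Nat.fib ((j : ℕ) + 1) :=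
        Nat.le_mul_of_pos_right _ (Nat.fib_pos.mpr (by omega))
    _ ≤ ∑ i, x i * Nat.fib ((i : ℕ) + 1) :=
        Finset.single_le_sum (f := fun i : Fin N => x i * Nat.fib ((i : ℕ) + 1))
          (fun i _ => Nat.zero_le _) (Finset.mem_univ j)
    _ = Nat.fib n := hx.1


/-- Theorem `ConjectureConsequences` (i): for `N ≥ 3`, a pair of primes
`(p,q)` compatible with `N`, and `1 ≤ n ≤ N`, suppose `min{f_x(t) : x ∈ S_n}` equals
`min{f_x(t) : x ∈ V_n}` for all `t > 0`.  If `X ⊆ V_n` satisfies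
`min{f_x(t) : x ∈ X} = min{f_x(t) : x ∈ V_n}` for all `t > 0`, then `S_n ⊆ X`. -/
theorem stmt16 (N p q : ℕ) (hN : 3 ≤ N) (hp : p.Prime) (hq : q.Prime) (hW : CondW N p q)
    (tt : ℕ → ℝ)
    (htt : ∀ m : ℕ, 3 ≤ m → m ≤ N + 1 →
      (0 < tt m ∧ peq p q m (tt m)) ∧ ∀ t' : ℝ, 0 < t' → peq p q m t' → t' = tt m)
    (hdec : ∀ m : ℕ, 3 ≤ m → m ≤ N → tt (m + 1) < tt m)
    (n : ℕ) (h1n : 1 ≤ n) (hnN : n ≤ N)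
    (hS : ∀ t : ℝ, 0 < t → ∃ m : ℝ,
      IsLeast ((fun x => fmeas N p q x t) '' Sset N n) m ∧
      IsLeast ((fun x => fmeas N p q x t) '' Vset N n) m)
    (X : Set (Fin N → ℕ)) (hXV : X ⊆ Vset N n)
    (hX : ∀ t : ℝ, 0 < t → ∃ m : ℝ,
      IsLeast ((fun x => fmeas N p q x t) '' X) m ∧
      IsLeast ((fun x => fmeas N p q x t) '' Vset N n) m) :
    Sset N n ⊆ X := by
  obtain ⟨hL, hLQ, hQ2⟩ := st16_logs N p q hN hp hq hW
  have hbpos : ∀ j : Fin N, 0 < mmax p q ((j:ℕ)+1) := fun j => st16_mmax_pos p q hL (by omega)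
  have hbinj : Function.Injective (fun j : Fin N => mmax p q ((j:ℕ)+1)) := by
    intro j1 j2 h
    by_contra hne
    simp only at h
    rcases lt_or_ge (j1:ℕ) (j2:ℕ) with hlt | hge
    · have := st16_mmax_mono p q hL hLQ hQ2 (m1 := (j1:ℕ)+1) (m2 := (j2:ℕ)+1) (by omega) (by omega)
      rw [h] at this
      exact lt_irrefl _ this
    · have hne' : (j1:ℕ) ≠ (j2:ℕ) := fun hc => hne (Fin.ext hc)
      have := st16_mmax_mono p q hL hLQ hQ2 (m1 := (j2:ℕ)+1) (m2 := (j1:ℕ)+1) (by omega) (by omega)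
      rw [h] at this
      exact lt_irrefl _ this
  set F : (Fin N → ℕ) → ℝ → ℝ :=
    fun z t => ∑ j : Fin N, (z j : ℝ) * Real.exp (Real.log (mmax p q ((j:ℕ)+1)) * t) with hF
  have hFsum : ∀ z t, F z t = ∑ j : Fin N, (z j : ℝ) * mmax p q ((j:ℕ)+1) ^ t := by
    intro z t
    refine Finset.sum_congr rfl fun j _ => ?_
    rw [st16_rpow_exp (hbpos j)]
  have hFrw : ∀ z t, fmeas N p q z t = (F z t) ^ (1/t) := by
    intro z t
    unfold fmeas
    rw [hFsum]
  have hFnonneg : ∀ z t, 0 ≤ F z t := by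
    intro z t
    refine Finset.sum_nonneg fun j _ => ?_
    positivity
  have hFanal : ∀ z, AnalyticOnNhd ℝ (F z) Set.univ := by
    intro z
    apply Finset.analyticOnNhd_fun_sum
    intro j _
    exact analyticOnNhd_const.mul
      (analyticOnNhd_rexp.comp (analyticOnNhd_const.mul analyticOnNhd_id) (Set.mapsTo_univ _ _))
  have key : ∀ (x : Fin N → ℕ) (lo hi : ℝ), 0 ≤ lo → lo < hi →
      (∀ t, t ∈ Set.Ioo lo hi → IsLeast ((fun y => fmeas N p q y t) '' Vset N n) (fmeas N p q x t)) →
      x ∈ X := by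
    intro x lo hi hlo hlohi hleast
    have hexists : ∀ t ∈ Set.Ioo lo hi, ∃ y ∈ X, F y t = F x t := by
      intro t ht
      have ht0 : 0 < t := lt_of_le_of_lt hlo ht.1
      obtain ⟨m, hmX, hmV⟩ := hX t ht0
      have hmeq : m = fmeas N p q x t := hmV.unique (hleast t ht)
      obtain ⟨y, hyX, hy⟩ := hmX.1
      refine ⟨y, hyX, ?_⟩
      have hfe : fmeas N p q y t = fmeas N p q x t := by rw [← hmeq]; exact hy
      rw [hFrw, hFrw] at hfe
      have h1 : ((F y t) ^ (1/t)) ^ t = ((F x t) ^ (1/t)) ^ t := by rw [hfe]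
      rwa [← Real.rpow_mul (hFnonneg y t), ← Real.rpow_mul (hFnonneg x t),
          one_div, inv_mul_cancel₀ (ne_of_gt ht0), Real.rpow_one, Real.rpow_one] at h1
    have hXfin : X.Finite := (st16_Vfin N n).subset hXV
    have hIinf : (Set.Ioo lo hi).Infinite := Set.Ioo_infinite hlohi
    have hcover : Set.Ioo lo hi ⊆ ⋃ y ∈ X, {t | t ∈ Set.Ioo lo hi ∧ F y t = F x t} := by
      intro t ht
      obtain ⟨y, hyX, hy⟩ := hexists t ht
      exact Set.mem_biUnion hyX ⟨ht, hy⟩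
    obtain ⟨y, hyX, hTinf⟩ : ∃ y ∈ X, {t | t ∈ Set.Ioo lo hi ∧ F y t = F x t}.Infinite := by
      by_contra hcon
      push_neg at hcon
      have hfin : (⋃ y ∈ X, {t | t ∈ Set.Ioo lo hi ∧ F y t = F x t}).Finite := by
        apply Set.Finite.biUnion hXfin
        intro y hy
        have := hcon y hy
        exact this
      exact hIinf (hfin.subset hcover)
    set T := {t | t ∈ Set.Ioo lo hi ∧ F y t = F x t} with hT
    have hTsub : T ⊆ Set.Icc lo hi := fun t ht => Set.Ioo_subset_Icc_self ht.1
    obtain ⟨z₀, hz₀, hacc⟩ := hTinf.exists_accPt_of_subset_isCompact isCompact_Icc hTsub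
    have hfreq0 : ∃ᶠ w in nhds z₀, w ≠ z₀ ∧ w ∈ T := (accPt_iff_frequently (x := z₀) (C := T)).mp hacc
    have hfreq : ∃ᶠ w in nhdsWithin z₀ {z₀}ᶜ, F y w = F x w := by
      rw [frequently_nhdsWithin_iff]
      exact hfreq0.mono (fun w hw => ⟨hw.2.2, hw.1⟩)
    have heq := (hFanal y).eqOn_of_preconnected_of_frequently_eq (hFanal x)
      isPreconnected_univ (Set.mem_univ z₀) hfreq
    have hcoef : (fun j : Fin N => (y j : ℝ) - (x j : ℝ)) = 0 := by
      apply Matrix.eq_zero_of_forall_pow_sum_mul_pow_eq_zero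
        (f := fun j : Fin N => mmax p q ((j:ℕ)+1)) hbinj
      intro k
      have hk := heq (Set.mem_univ ((k : ℕ) : ℝ))
      have he : ∀ z : Fin N → ℕ, F z ((k:ℕ):ℝ)
          = ∑ j : Fin N, (z j : ℝ) * mmax p q ((j:ℕ)+1) ^ (k:ℕ) := by
        intro z
        refine Finset.sum_congr rfl fun j _ => ?_
        rw [← st16_rpow_exp (hbpos j), Real.rpow_natCast]
      rw [he, he] at hk
      calc ∑ j : Fin N, ((y j : ℝ) - (x j : ℝ)) * mmax p q ((j:ℕ)+1) ^ (k:ℕ)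
          = (∑ j : Fin N, (y j : ℝ) * mmax p q ((j:ℕ)+1) ^ (k:ℕ))
            - ∑ j : Fin N, (x j : ℝ) * mmax p q ((j:ℕ)+1) ^ (k:ℕ) := by
            rw [← Finset.sum_sub_distrib]
            exact Finset.sum_congr rfl fun j _ => by ring
        _ = 0 := by rw [hk]; ring
    have hyx : y = x := by
      funext j
      have h2 := congrFun hcoef j
      simp only [Pi.zero_apply] at h2
      have : (y j : ℝ) = (x j : ℝ) := by linarith [sub_eq_zero.mp h2]
      exact_mod_cast this
    rw [← hyx]
    exact hyX
  have ttanti : ∀ m1 m2, 3 ≤ m1 → m1 ≤ m2 → m2 ≤ N+1 → tt m2 ≤ tt m1 := by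
    intro m1 m2 h3 h12 h2N
    induction m2 with
    | zero => omega
    | succ k ih =>
      rcases lt_or_ge m1 (k+1) with hlt | hge
      · have : tt (k+1) < tt k := hdec k (by omega) (by omega)
        exact le_of_lt (lt_of_lt_of_le this (ih (by omega) (by omega)))
      · have : m1 = k+1 := by omega
        rw [this]
  have ttpos : ∀ m, 3 ≤ m → m ≤ N+1 → 0 < tt m := fun m h1 h2 => ((htt m h1 h2).1).1
  intro s hsS
  by_cases hn1 : n = 1
  · subst hn1
    have hsx : s = xvec N 1 2 := by simpa [Sset] using hsS
    subst hsx
    apply key _ 1 2 (by norm_num) (by norm_num)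
    intro t ht
    have ht0 : (0:ℝ) < t := by linarith [ht.1]
    obtain ⟨m, hmS, hmV⟩ := hS t ht0
    obtain ⟨s', hs'S, hs'⟩ := hmS.1
    have hs'x : s' = xvec N 1 2 := by simpa [Sset] using hs'S
    have hmeq : m = fmeas N p q (xvec N 1 2) t := by rw [← hs', hs'x]
    rw [← hmeq]
    exact hmV
  · have hn2 : 2 ≤ n := by omega
    obtain ⟨i, hi3, hin1, rfl⟩ : ∃ i, 3 ≤ i ∧ i ≤ n + 1 ∧ s = xvec N n i := by
      simpa [Sset, hn1] using hsS
    have hphipos : ∀ j, 3 ≤ j → j ≤ N+1 → ∀ t : ℝ, 0 < t → t < tt j → 0 < st16_phi p q j t :=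
      fun j h1 h2 t ht hlt =>
        st16_phi_pos p q hL h1 (ttpos j h1 h2) (fun t' ht' hp' => (htt j h1 h2).2 t' ht' hp') ht hlt
    have hphineg : ∀ j, 3 ≤ j → j ≤ N+1 → ∀ t : ℝ, tt j < t → st16_phi p q j t < 0 :=
      fun j h1 h2 t hlt =>
        st16_phi_neg p q hL hLQ hQ2 h1 (ttpos j h1 h2) (fun t' ht' hp' => (htt j h1 h2).2 t' ht' hp') hlt
    have hmin : ∀ t : ℝ, 0 < t →
        (∀ j, 3 ≤ j → j ≤ n → (j < i → t < tt j) ∧ (i ≤ j → tt j < t)) →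
        IsLeast ((fun y => fmeas N p q y t) '' Vset N n) (fmeas N p q (xvec N n i) t) := by
      intro t ht hcond
      have fibnn : ∀ k : ℕ, (0:ℝ) ≤ (Nat.fib k : ℝ) := fun k => Nat.cast_nonneg _
      have stepup : ∀ j, 3 ≤ j → j ≤ n → i ≤ j → st16_g p q n j t ≤ st16_g p q n (j+1) t := by
        intro j h1 h2 hij
        have hphi := hphineg j h1 (by omega) t ((hcond j h1 h2).2 hij)
        have hstep := st16_g_step p q n j h1 h2 t
        nlinarith [fibnn (n+1-j)]
      have stepdown : ∀ j, 3 ≤ j → j ≤ n → j < i → st16_g p q n (j+1) t ≤ st16_g p q n j t := by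
        intro j h1 h2 hij
        have hphi := hphipos j h1 (by omega) t ht ((hcond j h1 h2).1 hij)
        have hstep := st16_g_step p q n j h1 h2 t
        nlinarith [fibnn (n+1-j)]
      have up : ∀ d j, j = i + d → j ≤ n+1 → st16_g p q n i t ≤ st16_g p q n j t := by
        intro d
        induction d with
        | zero =>
          intro j hj _
          rw [hj, Nat.add_zero]
        | succ d ih =>
          intro j hj hjn
          calc st16_g p q n i t ≤ st16_g p q n (i+d) t := ih (i+d) rfl (by omega)
            _ ≤ st16_g p q n (i+d+1) t := stepup (i+d) (by omega) (by omega) (by omega)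
            _ = st16_g p q n j t := by rw [show j = i+d+1 by omega]
      have down : ∀ d j, 3 ≤ j → j + d = i → st16_g p q n i t ≤ st16_g p q n j t := by
        intro d
        induction d with
        | zero =>
          intro j h1 hj
          rw [show j = i by omega]
        | succ d ih =>
          intro j h1 hj
          calc st16_g p q n i t ≤ st16_g p q n (j+1) t := ih (j+1) (by omega) (by omega)
            _ ≤ st16_g p q n j t := stepdown j h1 (by omega) (by omega)
      have chain : ∀ j, 3 ≤ j → j ≤ n+1 → st16_g p q n i t ≤ st16_g p q n j t := by
        intro j h1 h2
        rcases le_or_gt i j with hij | hij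
        · exact up (j - i) j (by omega) h2
        · exact down (i - j) j h1 (by omega)
      obtain ⟨m, hmS, hmV⟩ := hS t ht
      have hxiS : xvec N n i ∈ Sset N n := by
        simp only [Sset, if_neg hn1]
        exact ⟨i, hi3, hin1, rfl⟩
      have h1 : m ≤ fmeas N p q (xvec N n i) t := hmS.2 ⟨_, hxiS, rfl⟩
      obtain ⟨s', hs'S, hs'⟩ := hmS.1
      obtain ⟨j, hj3, hjn1, rfl⟩ : ∃ j, 3 ≤ j ∧ j ≤ n + 1 ∧ s' = xvec N n j := by
        simpa [Sset, hn1] using hs'S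
      have h2 : fmeas N p q (xvec N n i) t ≤ fmeas N p q (xvec N n j) t := by
        rw [hFrw, hFrw, hFsum, hFsum, st16_sum_xvec p q N n i hi3 hin1 hnN,
            st16_sum_xvec p q N n j hj3 hjn1 hnN]
        exact Real.rpow_le_rpow (st16_g_nonneg p q n i hL t) (chain j hj3 hjn1) (by positivity)
      have hm_eq : m = fmeas N p q (xvec N n i) t := le_antisymm h1 (hs' ▸ h2)
      rw [← hm_eq]
      exact hmV
    by_cases hin : i = n + 1
    · by_cases hn2' : n = 2
      · apply key _ 0 1 le_rfl one_pos
        intro t ht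
        exact hmin t ht.1 (fun j hj1 hj2 => by omega)
      · have hn3 : 3 ≤ n := by omega
        apply key _ 0 (tt n) le_rfl (ttpos n hn3 (by omega))
        intro t ht
        refine hmin t ht.1 (fun j hj1 hj2 =>
          ⟨fun _ => lt_of_lt_of_le ht.2 (ttanti j n hj1 hj2 (by omega)), fun hij => by omega⟩)
    · have hin' : i ≤ n := by omega
      by_cases hi3' : i = 3
      · subst hi3'
        have h3pos := ttpos 3 (by omega) (by omega)
        apply key _ (tt 3) (tt 3 + 1) h3pos.le (by linarith)
        intro t ht
        refine hmin t (lt_trans h3pos ht.1) ?_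
        intro j hj1 hj2
        refine ⟨fun hlt => by omega, fun hij => ?_⟩
        exact lt_of_le_of_lt (ttanti 3 j (by omega) hij (by omega)) ht.1
      · have hi4 : 4 ≤ i := by omega
        have hlt : tt i < tt (i-1) := by
          have := hdec (i-1) (by omega) (by omega)
          rwa [show i-1+1 = i by omega] at this
        have hipos := ttpos i (by omega) (by omega)
        apply key _ (tt i) (tt (i-1)) hipos.le hlt
        intro t ht
        refine hmin t (lt_trans hipos ht.1) ?_
        intro j hj1 hj2
        constructor
        · intro hji
          exact lt_of_lt_of_le ht.2 (ttanti j (i-1) hj1 (by omega) (by omega))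
        · intro hij
          exact lt_of_le_of_lt (ttanti i j (by omega) hij (by omega)) ht.1
end

section
/- The set of real numbers of the form log q / log p, where p and q range over all prime numbers, is dense in the interval (0,∞). -/
open Real

/-!
Take a prime `p` so large that `log 4 / log p < ε`. Bertrand's postulate puts a prime `q` in
`(p ^ x, 4 p ^ x]`, so `x < log q / log p ≤ x + log 4 / log p < x + ε`.
-/

lemma Nat.exists_prime_lt_and_le_four_mul {y : ℝ} (hy : 1 ≤ y) :
    ∃ q : ℕ, q.Prime ∧ y < q ∧ (q : ℝ) ≤ 4 * y := by
  have hceil_pos : ⌈y⌉₊ ≠ 0 := (Nat.ceil_pos.2 (by linarith)).ne'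
  obtain ⟨q, hq, hceil_lt, hle_two_mul⟩ := Nat.exists_prime_lt_and_le_two_mul ⌈y⌉₊ hceil_pos
  refine ⟨q, hq, (Nat.le_ceil y).trans_lt (by exact_mod_cast hceil_lt), ?_⟩
  have hceil_lt_add_one : (⌈y⌉₊ : ℝ) < y + 1 := Nat.ceil_lt_add_one (by linarith)
  have : (q : ℝ) ≤ 2 * ⌈y⌉₊ := by exact_mod_cast hle_two_mul
  linarith

lemma exists_prime_log_mem_Ioc {a : ℝ} (ha : 0 ≤ a) :
    ∃ q : ℕ, q.Prime ∧ a < log q ∧ log q ≤ a + log 4 := by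
  obtain ⟨q, hq, hlt, hle⟩ := Nat.exists_prime_lt_and_le_four_mul (one_le_exp ha)
  have hq_pos : (0 : ℝ) < q := by exact_mod_cast hq.pos
  refine ⟨q, hq, (lt_log_iff_exp_lt hq_pos).2 hlt, ?_⟩
  calc log q ≤ log (4 * exp a) := log_le_log hq_pos hle
    _ = a + log 4 := by rw [log_mul (by norm_num) (exp_pos a).ne', log_exp, add_comm]

lemma exists_prime_lt_log (M : ℝ) : ∃ p : ℕ, p.Prime ∧ M < log p := by
  obtain ⟨p, hle, hp⟩ := Nat.exists_infinite_primes (⌈exp M⌉₊ + 1)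
  refine ⟨p, hp, (lt_log_iff_exp_lt (by exact_mod_cast hp.pos)).2 ?_⟩
  calc exp M ≤ ⌈exp M⌉₊ := Nat.le_ceil _
    _ < p := by exact_mod_cast hle

/-- the set of numbers `log q / log p`, with `p` and `q` prime, is dense in
`(0,∞)`. -/
theorem stmt18 :
    ∀ x : ℝ, 0 < x → ∀ ε : ℝ, 0 < ε →
      ∃ p q : ℕ, p.Prime ∧ q.Prime ∧ |Real.log q / Real.log p - x| < ε := by
  intro x hx ε hε
  obtain ⟨p, hp, hlogp_big⟩ := exists_prime_lt_log (log 4 / ε)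
  have hlogp : 0 < log p := log_pos (by exact_mod_cast hp.one_lt)
  obtain ⟨q, hq, hlt, hle⟩ := exists_prime_log_mem_Ioc (mul_nonneg hx.le hlogp.le)
  refine ⟨p, q, hp, hq, abs_lt.2 ⟨?_, ?_⟩⟩
  · have : x < log q / log p := (lt_div_iff₀ hlogp).2 hlt
    linarith
  · have hlog4 : log 4 < ε * log p := (div_lt_iff₀' hε).1 hlogp_big
    rw [sub_lt_iff_lt_add, div_lt_iff₀ hlogp]
    linarith
end

section
/- Let N ≥ 3 be an integer, let λ : ℕ^N → ℕ^N be the shift map λ((x_1, x_2, …, x_N)) = (0, x_1, x_2, …, x_{N−1}), and let n be an integer with 2 ≤ n ≤ N. Then λ restricts to an injection from V_{n−1} into V_n, and moreover λ(R_{n−1}) ⊆ R_n and λ(R_{n−1}∖S_{n−1}) ⊆ R_n∖S_n. -/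
open Real

/-! On vectors with vanishing last entry, `λ` acts on the pair of weighted sums
`(Σ x_i h_i, Σ x_i h_{i-1})` as the Fibonacci matrix `(a, b) ↦ (a + b, a)`, so for `m ≥ 1` it
identifies `V_m` with the elements of `V_{m+1}` that vanish in the first entry, and no shift lies
in `V_1`. Elements of `V_m`, `m < N`, do vanish in the last entry, since `h_m < h_N`. In a
factorization of `λ z` all summands vanish in the first entry, hence are shifts of elements of
some `V_{i-1}`; un-shifting them factors `z`. Finally `λ` maps `S_i` into `S_{i+1}`, and only
elements of `S_{n-1}` are mapped into `S_n`. -/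

lemma shiftMap_apply_zero {N : ℕ} (x : Fin (N + 1) → ℕ) : shiftMap (N + 1) x 0 = 0 := by
  simp [shiftMap]

lemma shiftMap_apply_succ {N : ℕ} (x : Fin N → ℕ) (j : ℕ) (h : j + 1 < N) :
    shiftMap N x ⟨j + 1, h⟩ = x ⟨j, by omega⟩ := by
  simp [shiftMap]

lemma shiftMap_sum {N K : ℕ} (x : Fin K → Fin N → ℕ) :
    shiftMap N (∑ k, x k) = ∑ k, shiftMap N (x k) := by
  funext j
  simp only [shiftMap, Finset.sum_apply]
  split_ifs <;> simp

lemma shiftMap_eq_cons {N : ℕ} (x : Fin (N + 1) → ℕ) :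
    shiftMap (N + 1) x = Fin.cons 0 (Fin.init x) := by
  funext j
  refine Fin.cases ?_ (fun j => ?_) j
  · simp [shiftMap]
  · simp [shiftMap, Fin.init]
    rfl

lemma exists_shiftMap_eq {N : ℕ} {x : Fin (N + 1) → ℕ} (h0 : x 0 = 0) :
    ∃ y : Fin (N + 1) → ℕ, y (Fin.last N) = 0 ∧ shiftMap (N + 1) y = x :=
  ⟨Fin.snoc (Fin.tail x) 0, by simp,
    by rw [shiftMap_eq_cons, Fin.init_snoc, ← h0, Fin.cons_self_tail]⟩

lemma injOn_shiftMap {N : ℕ} :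
    Set.InjOn (shiftMap (N + 1)) {x | x (Fin.last N) = 0} := by
  intro x (hx : x (Fin.last N) = 0) y (hy : y (Fin.last N) = 0) h
  rw [shiftMap_eq_cons, shiftMap_eq_cons] at h
  rw [← Fin.snoc_init_self x, ← Fin.snoc_init_self y, Fin.cons_right_injective _ h, hx,
    hy]

lemma sum_shiftMap_mul {N : ℕ} {x : Fin (N + 1) → ℕ} (hx : x (Fin.last N) = 0)
    (w : ℕ → ℕ) :
    ∑ j, shiftMap (N + 1) x j * w j = ∑ j, x j * w (j + 1) := by
  rw [shiftMap_eq_cons, Fin.sum_univ_succ,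
    Fin.sum_univ_castSucc (f := fun j => x j * w (j + 1))]
  simp [Fin.init, hx]

lemma shiftMap_mem_Vset_iff_sums {N : ℕ} {y : Fin (N + 1) → ℕ} (hy : y (Fin.last N) = 0)
    (k : ℕ) :
    shiftMap (N + 1) y ∈ Vset (N + 1) k ↔
      ∑ i, y i * Nat.fib (i + 1) + ∑ i, y i * Nat.fib i = Nat.fib k ∧
        ∑ i, y i * Nat.fib (i + 1) = Nat.fib (k - 1) := by
  have hfib : ∑ i, y i * Nat.fib (i + 1 + 1) =
      ∑ i, y i * Nat.fib (i + 1) + ∑ i, y i * Nat.fib i := by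
    rw [← Finset.sum_add_distrib]
    congr 1 with i
    rw [Nat.fib_add_two]
    ring
  show (_ ∧ _) ↔ _
  rw [sum_shiftMap_mul hy (fun i => Nat.fib (i + 1)), sum_shiftMap_mul hy Nat.fib, hfib]

lemma shiftMap_mem_Vset_iff {N m : ℕ} {y : Fin (N + 1) → ℕ} (hy : y (Fin.last N) = 0)
    (hm : 1 ≤ m) : shiftMap (N + 1) y ∈ Vset (N + 1) (m + 1) ↔ y ∈ Vset (N + 1) m := by
  obtain ⟨k, rfl⟩ : ∃ k, m = k + 1 := ⟨m - 1, by omega⟩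
  rw [shiftMap_mem_Vset_iff_sums hy, Vset, Set.mem_ofPred_eq, Nat.fib_add_two]
  simp only [Nat.add_sub_cancel]
  omega

lemma shiftMap_notMem_Vset_one {N : ℕ} {y : Fin (N + 1) → ℕ} (hy : y (Fin.last N) = 0) :
    shiftMap (N + 1) y ∉ Vset (N + 1) 1 := by
  have hle : ∑ i, y i * Nat.fib i ≤ ∑ i, y i * Nat.fib (i + 1) :=
    Finset.sum_le_sum fun i _ => Nat.mul_le_mul_left _ (Nat.fib_mono (Nat.le_succ _))
  rw [shiftMap_mem_Vset_iff_sums hy]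
  simp only [Nat.fib_one, Nat.sub_self, Nat.fib_zero]
  omega

lemma apply_last_eq_zero_of_mem_Vset {N m : ℕ} {x : Fin (N + 1) → ℕ}
    (hx : x ∈ Vset (N + 1) m) (hmN : m ≤ N) (hN : 2 ≤ N) : x (Fin.last N) = 0 := by
  have hle : x (Fin.last N) * Nat.fib (N + 1) ≤ Nat.fib m := by
    rw [← hx.1]
    exact Finset.single_le_sum (f := fun i : Fin (N + 1) => x i * Nat.fib (i + 1))
      (fun _ _ => Nat.zero_le _) (Finset.mem_univ _)
  have hlt : Nat.fib m < Nat.fib (N + 1) :=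
    (Nat.fib_mono hmN).trans_lt (Nat.fib_lt_fib_succ hN)
  by_contra h
  have := Nat.le_mul_of_pos_left (Nat.fib (N + 1)) (Nat.pos_of_ne_zero h)
  omega

lemma ACF.shiftMap {N : ℕ} {z : Fin N → ℕ} (hz : ACF N z) : ACF N (shiftMap N z) := by
  rintro ⟨_ | j, hj⟩ hj1 hne ⟨i, hi⟩ hji
  · simp [_root_.shiftMap] at hne
  obtain ⟨i, rfl⟩ : ∃ i', i = i' + 1 := ⟨i - 1, by simp only at hji; omega⟩
  rw [shiftMap_apply_succ, shiftMap_apply_succ] at hne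
  rw [shiftMap_apply_succ]
  exact hz ⟨j, _⟩ _ hne ⟨i, _⟩ (by simp at hji ⊢; omega)

lemma shiftMap_xvec {N m i : ℕ} (hi : 3 ≤ i) :
    shiftMap N (xvec N m i) = xvec N (m + 1) (i + 1) := by
  funext j
  simp only [shiftMap, xvec]
  split_ifs <;> first | rfl | omega | (congr 1; omega)

lemma shiftMap_xvec_one_two {N : ℕ} : shiftMap N (xvec N 1 2) = xvec N 2 3 := by
  funext j
  simp only [shiftMap, xvec]
  split_ifs <;> first | rfl | omega

lemma xvec_apply_last {N m i : ℕ} (hi : i ≤ N + 1) : xvec (N + 1) m i (Fin.last N) = 0 := by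
  simp only [xvec, Fin.val_last]
  rw [if_neg (by omega), if_neg (by omega)]

lemma shiftMap_mem_Sset {N m : ℕ} {y : Fin N → ℕ} (hm : 1 ≤ m) (hy : y ∈ Sset N m) :
    shiftMap N y ∈ Sset N (m + 1) := by
  rw [Sset, if_neg (by omega)]
  by_cases h1 : m = 1
  · subst h1
    rw [Sset, if_pos rfl, Set.mem_singleton_iff] at hy
    exact ⟨3, le_rfl, le_rfl, hy ▸ shiftMap_xvec_one_two⟩
  · rw [Sset, if_neg h1] at hy
    obtain ⟨i, hi3, him, rfl⟩ := hy
    exact ⟨i + 1, by omega, by omega, shiftMap_xvec hi3⟩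

lemma mem_Sset_of_shiftMap_mem_Sset {N m : ℕ} {y : Fin (N + 1) → ℕ} (hy : y (Fin.last N) = 0)
    (hmN : m ≤ N) (h : shiftMap (N + 1) y ∈ Sset (N + 1) (m + 1)) : y ∈ Sset (N + 1) m := by
  rcases Nat.eq_zero_or_pos m with rfl | hm
  · rw [Sset, if_pos rfl, Set.mem_singleton_iff] at h
    simpa [shiftMap_apply_zero, xvec] using congrFun h 0
  rw [Sset, if_neg (by omega)] at h
  obtain ⟨i, hi3, hi, hyi⟩ := h
  rcases (by omega : i = 3 ∨ 4 ≤ i) with rfl | hi4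
  · obtain rfl : m = 1 := by
      have h0 := congrFun hyi 0
      simp only [shiftMap_apply_zero, xvec, Fin.coe_ofNat_eq_mod, Nat.zero_mod, zero_add,
        ↓reduceIte, Nat.reduceSubDiff] at h0
      have := Nat.fib_eq_zero.1 h0.symm
      omega
    rw [← shiftMap_xvec_one_two] at hyi
    rw [Sset, if_pos rfl, Set.mem_singleton_iff]
    exact injOn_shiftMap hy (xvec_apply_last (by omega)) hyi
  · have hshift := shiftMap_xvec (N := N + 1) (m := m) (i := i - 1) (by omega)
    rw [Nat.sub_add_cancel (by omega)] at hshift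
    rw [← hshift] at hyi
    rw [Sset, if_neg (by omega)]
    exact ⟨i - 1, by omega, by omega, injOn_shiftMap hy (xvec_apply_last (by omega)) hyi⟩

lemma SRestricted.shiftMap {N m : ℕ} {z : Fin (N + 1) → ℕ} (hz : SRestricted (N + 1) m z)
    (hzlast : z (Fin.last N) = 0) : SRestricted (N + 1) (m + 1) (shiftMap (N + 1) z) := by
  rintro K idx x ⟨hx, hsum⟩ hK
  have hx0 : ∀ k, x k 0 = 0 := by
    have : ∑ k, x k 0 = 0 := by rw [← Finset.sum_apply, ← hsum, shiftMap_apply_zero]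
    exact fun k => Finset.sum_eq_zero_iff.1 this k (Finset.mem_univ k)
  choose y hylast hyx using fun k => exists_shiftMap_eq (hx0 k)
  have hyV : ∀ k, 2 ≤ idx k ∧ y k ∈ Vset (N + 1) (idx k - 1) := fun k => by
    obtain ⟨hk1, -, hkV⟩ := hx k
    rw [← hyx k] at hkV
    have hk2 : 2 ≤ idx k := by
      by_contra! hk
      rw [show idx k = 1 by omega] at hkV
      exact shiftMap_notMem_Vset_one (hylast k) hkV
    rw [← Nat.sub_add_cancel (by omega : 1 ≤ idx k)] at hkV
    exact ⟨hk2, (shiftMap_mem_Vset_iff (hylast k) (by omega)).1 hkV⟩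
  have hzy : z = ∑ k, y k := by
    refine injOn_shiftMap hzlast ?_ ?_
    · simp [Finset.sum_apply, hylast]
    · rw [hsum, shiftMap_sum]
      simp only [hyx]
  have hfac : IsFactorization (N + 1) m z (fun k => idx k - 1) y := by
    refine ⟨fun k => ?_, hzy⟩
    dsimp only
    have := (hx k).2.1
    exact ⟨by have := (hyV k).1; omega, by omega, (hyV k).2⟩
  intro k
  obtain ⟨i, hi1, him, hyS⟩ := hz K _ y hfac hK k
  exact ⟨i + 1, by omega, by omega, hyx k ▸ shiftMap_mem_Sset hi1 hyS⟩

/-- for `N ≥ 3` and `2 ≤ n ≤ N`, the shift map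
`λ((x_1,…,x_N)) = (0,x_1,…,x_{N-1})` restricts to an injection from `V_{n-1}` into `V_n`,
and `λ(R_{n-1}) ⊆ R_n` and `λ(R_{n-1} \ S_{n-1}) ⊆ R_n \ S_n`. -/
theorem stmt19 (N n : ℕ) (hN : 3 ≤ N) (h2n : 2 ≤ n) (hnN : n ≤ N) :
    (∀ x ∈ Vset N (n - 1), shiftMap N x ∈ Vset N n) ∧
    Set.InjOn (shiftMap N) (Vset N (n - 1)) ∧
    shiftMap N '' Rset N (n - 1) ⊆ Rset N n ∧
    shiftMap N '' (Rset N (n - 1) \ Sset N (n - 1)) ⊆ Rset N n \ Sset N n := by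
  obtain ⟨M, rfl⟩ : ∃ M, N = M + 1 := ⟨N - 1, by omega⟩
  obtain ⟨m, rfl⟩ : ∃ m, n = m + 1 := ⟨n - 1, by omega⟩
  rw [Nat.add_sub_cancel]
  have hlast : ∀ x ∈ Vset (M + 1) m, x (Fin.last M) = 0 := fun x hx =>
    apply_last_eq_zero_of_mem_Vset hx (by omega) (by omega)
  have hV : ∀ x ∈ Vset (M + 1) m, shiftMap (M + 1) x ∈ Vset (M + 1) (m + 1) := fun x hx =>
    (shiftMap_mem_Vset_iff (hlast x hx) (by omega)).2 hx
  have hR : Set.MapsTo (shiftMap (M + 1)) (Rset (M + 1) m) (Rset (M + 1) (m + 1)) :=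
    fun z ⟨⟨hzV, hzC⟩, hzS⟩ =>
      ⟨⟨hV z hzV, hzC.shiftMap⟩, hzS.shiftMap (hlast z hzV)⟩
  refine ⟨hV, injOn_shiftMap.mono hlast, hR.image_subset, ?_⟩
  rintro _ ⟨z, ⟨hzR, hzS⟩, rfl⟩
  exact ⟨hR hzR, fun hS => hzS (mem_Sset_of_shiftMap_mem_Sset (hlast z hzR.1.1) (by omega) hS)⟩
end
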